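/- arXiv:2603.22764 — 2 statements merged into one kernel-verified Lean document; each statement's English description precedes it below -/
import Mathlib

section
/- Let (B, ‖·‖) be a uniformly convex Banach space, C a nonempty bounded closed convex subset of B, and f : C → C an asymptotically nonexpansive mapping. If (x_n) is a sequence in C converging weakly to x and ‖x_n − f(x_n)‖ → 0, then f(x) = x. -/
/-!
Two quantitative facts about a uniformly convex space drive the proof.

If a sequence converges weakly to `x₀` and stays within `D` of it, then some iterated midpoint
average of its terms, of a depth `t` depending only on `D` and `τ`, lies within `τ` of `x₀`:
as long as no term is `τ`-close to `x₀`, weak lower semicontinuity of the norm gives every term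
a later partner at distance `> τ`, and uniform convexity shrinks the radius of the sequence of
these midpoints by a fixed factor.

If a map is nonexpansive up to a small error `η` on a bounded convex set, then the midpoint of
two approximate fixed points is nearly equidistant from both, hence (uniform convexity again)
close to its image; so iterated midpoint averages of bounded depth are approximate fixed points.

For `m` large, `f^[m]` is nonexpansive up to `(k m - 1) · diam C` and `‖f^[m] (x n) - x n‖ → 0`.
Since `t` does not depend on the sequence, both facts apply to a tail of `(x n)` chosen after `t`,
giving `f^[m] x₀ → x₀`; continuity of `f` on `C` then gives `f x₀ = x₀`.
-/

open Filter Topology Bornology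

section AlmostNonexpansive

variable {X : Type*} [PseudoMetricSpace X]

def AlmostNonexpansiveOn (T : X → X) (C : Set X) (η : ℝ) : Prop :=
  ∀ u ∈ C, ∀ v ∈ C, dist (T u) (T v) ≤ dist u v + η

theorem AlmostNonexpansiveOn.mono {T : X → X} {C : Set X} {η η' : ℝ}
    (hT : AlmostNonexpansiveOn T C η) (hη : η ≤ η') : AlmostNonexpansiveOn T C η' :=
  fun u hu v hv => (hT u hu v hv).trans (by linarith)

variable {f : X → X} {C : Set X} {k : ℕ → ℝ}

theorem dist_iterate_le_sum_mul (hmaps : Set.MapsTo f C C)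
    (hf : ∀ m, ∀ u ∈ C, ∀ v ∈ C, dist (f^[m] u) (f^[m] v) ≤ k m * dist u v)
    {z : X} (hz : z ∈ C) (m : ℕ) :
    dist (f^[m] z) z ≤ (∑ j ∈ Finset.range m, k j) * dist (f z) z := by
  rw [dist_comm, Finset.sum_mul]
  refine (dist_le_range_sum_dist (fun i => f^[i] z) m).trans (Finset.sum_le_sum fun j _ => ?_)
  rw [Function.iterate_succ_apply, dist_comm (f z)]
  exact hf j z hz (f z) (hmaps hz)

theorem tendsto_dist_iterate (hmaps : Set.MapsTo f C C)
    (hf : ∀ m, ∀ u ∈ C, ∀ v ∈ C, dist (f^[m] u) (f^[m] v) ≤ k m * dist u v)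
    {x : ℕ → X} (hx : ∀ n, x n ∈ C) (hfix : Tendsto (fun n => dist (f (x n)) (x n)) atTop (𝓝 0))
    (m : ℕ) : Tendsto (fun n => dist (f^[m] (x n)) (x n)) atTop (𝓝 0) :=
  squeeze_zero (fun _ => dist_nonneg) (fun n => dist_iterate_le_sum_mul hmaps hf (hx n) m)
    (by simpa using hfix.const_mul _)

theorem eventually_almostNonexpansiveOn_iterate (hC : IsBounded C) (hk : Tendsto k atTop (𝓝 1))
    (hf : ∀ m, ∀ u ∈ C, ∀ v ∈ C, dist (f^[m] u) (f^[m] v) ≤ k m * dist u v) {η : ℝ}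
    (hη : 0 < η) : ∀ᶠ m in atTop, AlmostNonexpansiveOn f^[m] C η := by
  obtain ⟨D, hD⟩ := Metric.isBounded_iff.1 hC
  have hD₁ : 0 < |D| + 1 := by positivity
  filter_upwards [hk.eventually (gt_mem_nhds (lt_add_of_pos_right 1 (div_pos hη hD₁)))]
    with m hm u hu v hv
  have hsmall : η / (|D| + 1) * dist u v ≤ η := by
    rw [div_mul_eq_mul_div, div_le_iff₀ hD₁]
    gcongr
    linarith [hD hu hv, le_abs_self D]
  calc dist (f^[m] u) (f^[m] v) ≤ k m * dist u v := hf m u hu v hv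
    _ ≤ (1 + η / (|D| + 1)) * dist u v := by gcongr
    _ ≤ dist u v + η := by linarith

end AlmostNonexpansive

section WeakConvergence

variable {E : Type*} [NormedAddCommGroup E] [NormedSpace ℝ E] {y : ℕ → E} {x₀ : E}

def WeakTendsto (y : ℕ → E) (x₀ : E) : Prop :=
  ∀ φ : E →L[ℝ] ℝ, Tendsto (fun n => φ (y n)) atTop (𝓝 (φ x₀))

theorem Convex.mem_of_weakTendsto {C : Set E} (hC : Convex ℝ C) (hCc : IsClosed C)
    (hy : ∀ n, y n ∈ C) (hweak : WeakTendsto y x₀) : x₀ ∈ C := by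
  by_contra hx₀
  obtain ⟨φ, u, hφC, hφx₀⟩ := geometric_hahn_banach_closed_point hC hCc hx₀
  exact (le_of_tendsto' (hweak φ) fun n => (hφC _ (hy n)).le).not_gt hφx₀

theorem WeakTendsto.eventually_lt_norm_sub (hweak : WeakTendsto y x₀) {z : E} {τ : ℝ}
    (h : τ < ‖z - x₀‖) : ∀ᶠ n in atTop, τ < ‖z - y n‖ := by
  obtain ⟨g, hg, hgz⟩ := exists_dual_vector'' ℝ (z - x₀)
  have hlim : Tendsto (fun n => g (z - y n)) atTop (𝓝 (g (z - x₀))) := by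
    simpa only [map_sub] using tendsto_const_nhds.sub (hweak g)
  filter_upwards [hlim.eventually (lt_mem_nhds (by rwa [hgz]))] with n hn
  calc τ < g (z - y n) := hn
    _ ≤ ‖g (z - y n)‖ := Real.le_norm_self _
    _ ≤ ‖g‖ * ‖z - y n‖ := g.le_opNorm _
    _ ≤ ‖z - y n‖ := mul_le_of_le_one_left (norm_nonneg _) hg

theorem WeakTendsto.exists_tendsto_atTop_forall_lt_norm_sub (hweak : WeakTendsto y x₀) {τ : ℝ}
    (hfar : ∀ n, τ < ‖y n - x₀‖) :
    ∃ b : ℕ → ℕ, Tendsto b atTop atTop ∧ ∀ n, τ < ‖y n - y (b n)‖ := by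
  choose b hb hge using fun n =>
    ((hweak.eventually_lt_norm_sub (hfar n)).and (eventually_ge_atTop n)).exists
  exact ⟨b, tendsto_atTop_mono hge tendsto_id, hb⟩

theorem WeakTendsto.midpoint_comp (hweak : WeakTendsto y x₀) {b : ℕ → ℕ}
    (hb : Tendsto b atTop atTop) : WeakTendsto (fun n => midpoint ℝ (y n) (y (b n))) x₀ := by
  intro φ
  have h := (hweak φ).midpoint (R := ℝ) ((hweak φ).comp hb)
  rw [midpoint_self] at h
  simpa [midpoint_eq_smul_add, mul_add] using h

end WeakConvergence

section UniformConvex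

variable {E : Type*} [NormedAddCommGroup E] [NormedSpace ℝ E] [UniformConvexSpace E]

theorem exists_forall_norm_add_le_two_sub_mul {ε : ℝ} (hε : 0 < ε) :
    ∃ δ, 0 < δ ∧ ∀ (r : ℝ) (u v : E), ‖u‖ ≤ r → ‖v‖ ≤ r → ε * r ≤ ‖u - v‖ →
      ‖u + v‖ ≤ (2 - δ) * r := by
  obtain ⟨δ, hδ, h⟩ := exists_forall_closed_ball_dist_add_le_two_sub E hε
  refine ⟨δ, hδ, fun r u v hu hv huv => ?_⟩
  rcases le_or_gt r 0 with hr | hr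
  · nlinarith [norm_add_le u v]
  have hscale : ∀ w : E, ‖r⁻¹ • w‖ = ‖w‖ / r := fun w => by
    rw [norm_smul_of_nonneg (inv_nonneg.2 hr.le), inv_mul_eq_div]
  have := @h (r⁻¹ • u) (by rw [hscale, div_le_one hr]; exact hu) (r⁻¹ • v)
    (by rw [hscale, div_le_one hr]; exact hv) (by rw [← smul_sub, hscale, le_div_iff₀ hr]; exact huv)
  rwa [← smul_add, hscale, div_le_iff₀ hr] at this

theorem exists_forall_dist_midpoint_le (D : ℝ) {ε : ℝ} (hε : 0 < ε) :
    ∃ η > 0, ∀ x y w : E, dist x y ≤ D → dist w x ≤ dist x y / 2 + η →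
      dist w y ≤ dist x y / 2 + η → dist w (midpoint ℝ x y) ≤ ε := by
  have hDε : 0 < |D| + ε := by positivity
  obtain ⟨δ, hδ, huc⟩ :=
    exists_forall_norm_add_le_two_sub_mul (E := E) (div_pos (mul_pos two_pos hε) hDε)
  refine ⟨min (ε / 2) (δ * ε / 4), by positivity, fun x y w hxy hwx hwy => ?_⟩
  set η := min (ε / 2) (δ * ε / 4)
  have hη : 0 < η := by positivity
  have hη₁ : η ≤ ε / 2 := min_le_left _ _
  have hη₂ : η ≤ δ * ε / 4 := min_le_right _ _
  simp only [dist_eq_norm] at *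
  set R := ‖x - y‖ / 2 + η with hRdef
  have hsum : ‖(w - x) + (y - w)‖ = ‖x - y‖ := by rw [sub_add_sub_cancel', norm_sub_rev]
  have hdiff : ‖w - midpoint ℝ x y‖ = ‖(w - x) - (y - w)‖ / 2 := by
    have : w - midpoint ℝ x y = (2⁻¹ : ℝ) • ((w - x) - (y - w)) := by
      rw [midpoint_eq_smul_add, invOf_eq_inv]; module
    rw [this, norm_smul, norm_inv, Real.norm_two, inv_mul_eq_div]
  have hwy' : ‖y - w‖ ≤ R := by rwa [norm_sub_rev]
  have hR : R ≤ (|D| + ε) / 2 := by rw [hRdef]; linarith [le_abs_self D]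
  rw [hdiff]
  rcases lt_or_ge ‖(w - x) - (y - w)‖ (2 * ε / (|D| + ε) * R) with hclose | hfar
  · have : 2 * ε / (|D| + ε) * R ≤ ε := by
      rw [div_mul_eq_mul_div, div_le_iff₀ hDε]; nlinarith
    linarith
  · have hxy' := huc R _ _ hwx hwy' hfar
    rw [hsum] at hxy'
    have : δ * ‖x - y‖ ≤ 4 * η := by rw [hRdef] at hxy'; nlinarith [mul_pos hδ hη]
    have : ‖x - y‖ ≤ ε := by nlinarith
    linarith [norm_sub_le (w - x) (y - w), hRdef]

end UniformConvex

section DyadicAverages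

variable {E : Type*} [AddCommGroup E] [Module ℝ E]

def dyadicAverages (S : Set E) : ℕ → Set E
  | 0 => S
  | n + 1 => Set.image2 (midpoint ℝ) (dyadicAverages S n) (dyadicAverages S n)

theorem dyadicAverages_mono (S : Set E) : Monotone (dyadicAverages S) :=
  monotone_nat_of_le_succ fun _ z hz => ⟨z, hz, z, hz, midpoint_self ℝ z⟩

theorem Convex.dyadicAverages_subset {C S : Set E} (hC : Convex ℝ C) (hS : S ⊆ C) :
    ∀ n, dyadicAverages S n ⊆ C
  | 0 => hS
  | n + 1 => by
    rintro _ ⟨u, hu, v, hv, rfl⟩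
    exact hC.midpoint_mem (hC.dyadicAverages_subset hS n hu) (hC.dyadicAverages_subset hS n hv)

end DyadicAverages

section ApproximateFixedPoints

variable {E : Type*} [NormedAddCommGroup E] [NormedSpace ℝ E] [UniformConvexSpace E]
  {C : Set E}

theorem exists_forall_mem_dyadicAverages_dist_le (hC : Convex ℝ C) (hCb : IsBounded C) (n : ℕ)
    {ε : ℝ} (hε : 0 < ε) :
    ∃ η > 0, ∀ (T : E → E) (S : Set E), AlmostNonexpansiveOn T C η → S ⊆ C →
      (∀ z ∈ S, dist (T z) z ≤ η) → ∀ z ∈ dyadicAverages S n, dist (T z) z ≤ ε := by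
  induction n generalizing ε with
  | zero => exact ⟨ε, hε, fun T S _ _ hS => hS⟩
  | succ n ih =>
    obtain ⟨D, hD⟩ := Metric.isBounded_iff.1 hCb
    obtain ⟨η₁, hη₁, hmid⟩ := exists_forall_dist_midpoint_le (E := E) D hε
    obtain ⟨η₂, hη₂, hprev⟩ := ih (half_pos hη₁)
    refine ⟨min η₂ (η₁ / 2), by positivity, fun T S hT hSC hS => ?_⟩
    rintro _ ⟨u, hu, v, hv, rfl⟩
    have hAC := hC.dyadicAverages_subset hSC n
    have hzC : midpoint ℝ u v ∈ C := hC.midpoint_mem (hAC hu) (hAC hv)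
    have hclose : ∀ p ∈ dyadicAverages S n,
        dist (T (midpoint ℝ u v)) p ≤ dist (midpoint ℝ u v) p + η₁ := fun p hp => by
      have hTp := hprev T S (hT.mono (min_le_left _ _)) hSC
        (fun z hz => (hS z hz).trans (min_le_left _ _)) p hp
      have hTz := hT _ hzC p (hAC hp)
      linarith [dist_triangle (T (midpoint ℝ u v)) (T p) p, min_le_right η₂ (η₁ / 2)]
    have hhalf_u : dist (midpoint ℝ u v) u = dist u v / 2 := by
      rw [dist_midpoint_left, Real.norm_two, inv_mul_eq_div]
    have hhalf_v : dist (midpoint ℝ u v) v = dist u v / 2 := by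
      rw [dist_midpoint_right, Real.norm_two, inv_mul_eq_div]
    exact hmid u v _ (hD (hAC hu) (hAC hv)) (hhalf_u ▸ hclose u hu) (hhalf_v ▸ hclose v hv)

end ApproximateFixedPoints

section BanachSaks

variable {E : Type*} [NormedAddCommGroup E] [NormedSpace ℝ E]

theorem norm_midpoint_sub (a b x₀ : E) :
    ‖midpoint ℝ a b - x₀‖ = ‖(a - x₀) + (b - x₀)‖ / 2 := by
  have : midpoint ℝ a b - x₀ = (2⁻¹ : ℝ) • ((a - x₀) + (b - x₀)) := by
    rw [midpoint_eq_smul_add, invOf_eq_inv]; module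
  rw [this, norm_smul, norm_inv, Real.norm_two, inv_mul_eq_div]

theorem exists_mem_dyadicAverages_norm_sub_le_max {S : Set E} {x₀ : E} {D τ q : ℝ} (hq : q ≤ 1)
    (huc : ∀ r ≤ D, ∀ u v : E, ‖u‖ ≤ r → ‖v‖ ≤ r → τ ≤ ‖u - v‖ → ‖u + v‖ ≤ 2 * q * r)
    (t : ℕ) : ∀ (l : ℕ) (r : ℝ) (y : ℕ → E), r ≤ D → (∀ n, y n ∈ dyadicAverages S l) →
      WeakTendsto y x₀ → (∀ n, ‖y n - x₀‖ ≤ r) →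
      ∃ z ∈ dyadicAverages S (l + t), ‖z - x₀‖ ≤ max τ (q ^ t * r) := by
  induction t with
  | zero =>
    intro l r y _ hyS _ hr
    exact ⟨y 0, hyS 0, by simpa using (hr 0).trans (le_max_right _ _)⟩
  | succ t ih =>
    intro l r y hrD hyS hweak hr
    by_cases! hnear : ∃ n, ‖y n - x₀‖ ≤ τ
    · obtain ⟨n, hn⟩ := hnear
      exact ⟨y n, dyadicAverages_mono S (by omega) (hyS n), hn.trans (le_max_left _ _)⟩
    obtain ⟨b, hb, hsep⟩ := hweak.exists_tendsto_atTop_forall_lt_norm_sub hnear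
    have hr₀ : 0 ≤ r := (norm_nonneg _).trans (hr 0)
    have hmid : ∀ n, ‖midpoint ℝ (y n) (y (b n)) - x₀‖ ≤ q * r := fun n => by
      have := huc r hrD _ _ (hr n) (hr (b n)) (by rw [sub_sub_sub_cancel_right]; exact (hsep n).le)
      rw [norm_midpoint_sub]
      linarith
    obtain ⟨z, hz, hzx⟩ := ih (l + 1) (q * r) _ (by nlinarith)
      (fun n => ⟨_, hyS n, _, hyS (b n), rfl⟩) (hweak.midpoint_comp hb) hmid
    refine ⟨z, by rwa [add_comm t 1, ← add_assoc], hzx.trans_eq ?_⟩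
    rw [pow_succ, mul_assoc]

variable [UniformConvexSpace E]

theorem exists_forall_exists_mem_dyadicAverages_norm_sub_le (D : ℝ) {τ : ℝ} (hτ : 0 < τ) :
    ∃ t : ℕ, ∀ (S : Set E) (y : ℕ → E) (x₀ : E), (∀ n, y n ∈ S) → WeakTendsto y x₀ →
      (∀ n, ‖y n - x₀‖ ≤ D) → ∃ z ∈ dyadicAverages S t, ‖z - x₀‖ ≤ τ := by
  set D' := max D τ
  have hD' : 0 < D' := hτ.trans_le (le_max_right _ _)
  obtain ⟨δ, hδ, huc⟩ := exists_forall_norm_add_le_two_sub_mul (E := E) (div_pos hτ hD')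
  set q := max (1 - δ / 2) 0
  obtain ⟨t, ht⟩ := exists_pow_lt_of_lt_one (div_pos hτ hD')
    (show q < 1 from max_lt (by linarith) one_pos)
  have huc' : ∀ r ≤ D', ∀ u v : E, ‖u‖ ≤ r → ‖v‖ ≤ r → τ ≤ ‖u - v‖ → ‖u + v‖ ≤ 2 * q * r := by
    intro r hr u v hu hv huv
    have hr₀ : 0 ≤ r := (norm_nonneg u).trans hu
    have hsep : τ / D' * r ≤ ‖u - v‖ := by
      rw [div_mul_eq_mul_div, div_le_iff₀ hD']
      nlinarith
    nlinarith [huc r u v hu hv hsep, le_max_left (1 - δ / 2) 0]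
  refine ⟨t, fun S y x₀ hyS hweak hy => ?_⟩
  obtain ⟨z, hz, hzx⟩ := exists_mem_dyadicAverages_norm_sub_le_max (S := S)
    (max_le (by linarith) zero_le_one) huc' t 0 D' y le_rfl hyS hweak
    (fun n => (hy n).trans (le_max_left _ _))
  exact ⟨z, by simpa using hz, hzx.trans (max_le le_rfl ((lt_div_iff₀ hD').1 ht).le)⟩

end BanachSaks

section Demiclosedness

variable {E : Type*} [NormedAddCommGroup E] [NormedSpace ℝ E] [UniformConvexSpace E]

theorem exists_forall_dist_le_of_weakTendsto {C : Set E} (hC : Convex ℝ C) (hCb : IsBounded C)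
    {ε : ℝ} (hε : 0 < ε) :
    ∃ η > 0, ∀ T : E → E, AlmostNonexpansiveOn T C η → ∀ (y : ℕ → E) (x₀ : E),
      (∀ n, y n ∈ C) → x₀ ∈ C → WeakTendsto y x₀ →
      (∀ᶠ n in atTop, dist (T (y n)) (y n) ≤ η) → dist (T x₀) x₀ ≤ ε := by
  obtain ⟨D, hD⟩ := Metric.isBounded_iff.1 hCb
  have hτ : 0 < ε / 4 := by positivity
  obtain ⟨t, hdyadic⟩ := exists_forall_exists_mem_dyadicAverages_norm_sub_le (E := E) D hτ
  obtain ⟨η, hη, hfix⟩ := exists_forall_mem_dyadicAverages_dist_le hC hCb t hτ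
  refine ⟨min η (ε / 4), by positivity, fun T hT y x₀ hy hx₀ hweak hev => ?_⟩
  obtain ⟨N, hN⟩ := eventually_atTop.1 hev
  set S := Set.range fun n => y (n + N)
  have hSC : S ⊆ C := Set.range_subset_iff.2 fun n => hy _
  obtain ⟨z, hz, hzx⟩ := hdyadic S (fun n => y (n + N)) x₀ (fun n => ⟨n, rfl⟩)
    (fun φ => (hweak φ).comp (tendsto_add_atTop_nat N))
    (fun n => by rw [← dist_eq_norm]; exact hD (hy _) hx₀)
  have hTz : dist (T z) z ≤ ε / 4 := hfix T S (hT.mono (min_le_left _ _)) hSC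
    (by rintro _ ⟨n, rfl⟩; exact (hN _ (by omega)).trans (min_le_left _ _)) z hz
  have hTx₀ := hT x₀ hx₀ z (hC.dyadicAverages_subset hSC t hz)
  rw [← dist_eq_norm] at hzx
  linarith [dist_triangle4 (T x₀) (T z) z x₀, dist_comm x₀ z, min_le_right η (ε / 4)]

end Demiclosedness

theorem xu_demiclosedness_general {B : Type*} [NormedAddCommGroup B] [NormedSpace ℝ B]
    [UniformConvexSpace B]
    (C : Set B) (hbdd : Bornology.IsBounded C) (hcl : IsClosed C)
    (hconv : Convex ℝ C)
    (f : B → B) (hmaps : Set.MapsTo f C C)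
    (k : ℕ → ℝ) (hk : Tendsto k atTop (nhds 1))
    (hasymp : ∀ m, ∀ x ∈ C, ∀ y ∈ C, ‖f^[m] x - f^[m] y‖ ≤ k m * ‖x - y‖)
    (x : ℕ → B) (hx : ∀ n, x n ∈ C) (x₀ : B)
    (hweak : ∀ φ : B →L[ℝ] ℝ, Tendsto (fun n => φ (x n)) atTop (nhds (φ x₀)))
    (hfix : Tendsto (fun n => ‖x n - f (x n)‖) atTop (nhds 0)) :
    f x₀ = x₀ := by
  have hasymp' : ∀ m, ∀ u ∈ C, ∀ v ∈ C, dist (f^[m] u) (f^[m] v) ≤ k m * dist u v := by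
    simpa only [dist_eq_norm] using hasymp
  have hfix' : Tendsto (fun n => dist (f (x n)) (x n)) atTop (𝓝 0) := by
    simpa only [dist_eq_norm, norm_sub_rev] using hfix
  have hx₀ : x₀ ∈ C := hconv.mem_of_weakTendsto hcl hx hweak
  have horbit : Tendsto (fun m => f^[m] x₀) atTop (𝓝 x₀) := by
    refine Metric.tendsto_nhds.2 fun ε hε => ?_
    obtain ⟨η, hη, hdemi⟩ := exists_forall_dist_le_of_weakTendsto hconv hbdd (half_pos hε)
    filter_upwards [eventually_almostNonexpansiveOn_iterate hbdd hk hasymp' hη] with m hm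
    have happrox := (tendsto_dist_iterate hmaps hasymp' hx hfix' m).eventually (ge_mem_nhds hη)
    exact (hdemi _ hm x x₀ hx hx₀ hweak happrox).trans_lt (half_lt_self hε)
  have hcont : ContinuousOn f C := (LipschitzOnWith.of_dist_le' (hasymp' 1)).continuousOn
  have hnext : Tendsto (fun m => f (f^[m] x₀)) atTop (𝓝 (f x₀)) :=
    (hcont x₀ hx₀).tendsto.comp
      (tendsto_nhdsWithin_iff.2 ⟨horbit, Eventually.of_forall fun m => hmaps.iterate m hx₀⟩)
  refine tendsto_nhds_unique hnext ?_
  simpa only [Function.comp_def, Function.iterate_succ_apply'] using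
    horbit.comp (tendsto_add_atTop_nat 1)

theorem xu_demiclosedness {B : Type*} [NormedAddCommGroup B] [NormedSpace ℝ B]
    [UniformConvexSpace B] [CompleteSpace B]
    (C : Set B) (hne : C.Nonempty) (hbdd : Bornology.IsBounded C) (hcl : IsClosed C)
    (hconv : Convex ℝ C)
    (f : B → B) (hmaps : Set.MapsTo f C C)
    (k : ℕ → ℝ) (hk : Tendsto k atTop (nhds 1))
    (hasymp : ∀ m, ∀ x ∈ C, ∀ y ∈ C, ‖f^[m] x - f^[m] y‖ ≤ k m * ‖x - y‖)
    (x : ℕ → B) (hx : ∀ n, x n ∈ C) (x₀ : B)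
    (hweak : ∀ φ : B →L[ℝ] ℝ, Tendsto (fun n => φ (x n)) atTop (nhds (φ x₀)))
    (hfix : Tendsto (fun n => ‖x n - f (x n)‖) atTop (nhds 0)) :
    f x₀ = x₀ :=
  xu_demiclosedness_general C hbdd hcl hconv f hmaps k hk hasymp x hx x₀ hweak hfix
end

section
/- Let (B, ‖·‖) be a Banach space satisfying Opial's condition, C a nonempty closed convex subset of B, and f : C → B a nonexpansive mapping. If (x_n) is a sequence in C converging weakly to x ∈ C and x_n − f(x_n) → y strongly, then x − f(x) = y. -/
/-! If `x₀ - f x₀ ≠ y`, then `z := f x₀ + y` differs from the weak limit `x₀`, and nonexpansiveness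
gives `‖xₙ - z‖ ≤ ‖xₙ - f xₙ - y‖ + ‖xₙ - x₀‖` with the first term tending to `0`. Hence
`liminf ‖xₙ - z‖ ≤ liminf ‖xₙ - x₀‖`, contradicting Opial's condition. The liminfs are those of
bounded sequences because weakly convergent sequences are bounded (uniform boundedness principle,
applied to the image of `xₙ` in the bidual). -/

open Filter Topology

theorem exists_norm_le_of_forall_exists_norm_dual_le {𝕜 E ι : Type*} [RCLike 𝕜]
    [NormedAddCommGroup E] [NormedSpace 𝕜 E] {u : ι → E}
    (h : ∀ φ : StrongDual 𝕜 E, ∃ C, ∀ i, ‖φ (u i)‖ ≤ C) : ∃ C, ∀ i, ‖u i‖ ≤ C := by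
  obtain ⟨C, hC⟩ := banach_steinhaus (g := fun i => NormedSpace.inclusionInDoubleDual 𝕜 E (u i)) h
  exact ⟨C, fun i => (NormedSpace.inclusionInDoubleDualLi 𝕜 (E := E)).norm_map (u i) ▸ hC i⟩

theorem Filter.liminf_le_liminf_of_le_add_of_tendsto_zero {ι : Type*} {l : Filter ι} [l.NeBot]
    {u v e : ι → ℝ} (hu : IsBoundedUnder (· ≥ ·) l u) (hv_le : IsBoundedUnder (· ≤ ·) l v)
    (hv_ge : IsBoundedUnder (· ≥ ·) l v) (he : Tendsto e l (𝓝 0))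
    (h : ∀ᶠ i in l, u i ≤ e i + v i) : liminf u l ≤ liminf v l :=
  calc liminf u l
      ≤ liminf (e + v) l := liminf_le_liminf h hu
        (isBoundedUnder_le_add he.isBoundedUnder_le hv_le).isCoboundedUnder_flip
    _ ≤ limsup e l + liminf v l :=
        liminf_add_le he.isBoundedUnder_ge he.isBoundedUnder_le hv_ge hv_le.isCoboundedUnder_flip
    _ = liminf v l := by rw [he.limsup_eq, zero_add]

theorem browder_demiclosedness_opial_general {B : Type*} [NormedAddCommGroup B] [NormedSpace ℝ B]
    (hopial : ∀ (u : ℕ → B) (x z : B),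
      (∀ φ : B →L[ℝ] ℝ, Tendsto (fun n => φ (u n)) atTop (nhds (φ x))) → x ≠ z →
        liminf (fun n => ‖u n - x‖) atTop < liminf (fun n => ‖u n - z‖) atTop)
    (C : Set B)
    (f : B → B) (hnonexp : ∀ u ∈ C, ∀ v ∈ C, ‖f u - f v‖ ≤ ‖u - v‖)
    (x : ℕ → B) (hx : ∀ n, x n ∈ C) (x₀ : B) (hx₀ : x₀ ∈ C)
    (hweak : ∀ φ : B →L[ℝ] ℝ, Tendsto (fun n => φ (x n)) atTop (nhds (φ x₀)))
    (y : B) (hstrong : Tendsto (fun n => x n - f (x n)) atTop (nhds y)) :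
    x₀ - f x₀ = y := by
  by_contra hne
  have hx₀_ne : x₀ ≠ f x₀ + y := fun h => hne (sub_eq_of_eq_add' h)
  obtain ⟨M, hM⟩ := exists_norm_le_of_forall_exists_norm_dual_le fun φ =>
    let ⟨c, hc⟩ := (hweak φ).norm.bddAbove_range
    ⟨c, fun n => hc ⟨n, rfl⟩⟩
  have hbdd : ∀ n, ‖x n - x₀‖ ≤ M + ‖x₀‖ := fun n =>
    (norm_sub_le _ _).trans (add_le_add_left (hM n) _)
  have hclose : ∀ n, ‖x n - (f x₀ + y)‖ ≤ ‖x n - f (x n) - y‖ + ‖x n - x₀‖ := fun n =>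
    calc ‖x n - (f x₀ + y)‖ = ‖(x n - f (x n) - y) + (f (x n) - f x₀)‖ := by congr 1; abel
      _ ≤ ‖x n - f (x n) - y‖ + ‖x n - x₀‖ :=
        (norm_add_le _ _).trans (add_le_add_right (hnonexp _ (hx n) _ hx₀) _)
  have herr : Tendsto (fun n => ‖x n - f (x n) - y‖) atTop (𝓝 0) := by
    simpa using (hstrong.sub_const y).norm
  refine (hopial x x₀ _ hweak hx₀_ne).not_ge <|
    liminf_le_liminf_of_le_add_of_tendsto_zero (isBoundedUnder_of ⟨0, fun _ => norm_nonneg _⟩)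
      (isBoundedUnder_of ⟨_, hbdd⟩) (isBoundedUnder_of ⟨0, fun _ => norm_nonneg _⟩) herr
      (Eventually.of_forall hclose)

theorem browder_demiclosedness_opial {B : Type*} [NormedAddCommGroup B] [NormedSpace ℝ B]
    [CompleteSpace B]
    (hopial : ∀ (u : ℕ → B) (x z : B),
      (∀ φ : B →L[ℝ] ℝ, Tendsto (fun n => φ (u n)) atTop (nhds (φ x))) → x ≠ z →
        liminf (fun n => ‖u n - x‖) atTop < liminf (fun n => ‖u n - z‖) atTop)
    (C : Set B) (hne : C.Nonempty) (hcl : IsClosed C) (hconv : Convex ℝ C)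
    (f : B → B) (hnonexp : ∀ u ∈ C, ∀ v ∈ C, ‖f u - f v‖ ≤ ‖u - v‖)
    (x : ℕ → B) (hx : ∀ n, x n ∈ C) (x₀ : B) (hx₀ : x₀ ∈ C)
    (hweak : ∀ φ : B →L[ℝ] ℝ, Tendsto (fun n => φ (x n)) atTop (nhds (φ x₀)))
    (y : B) (hstrong : Tendsto (fun n => x n - f (x n)) atTop (nhds y)) :
    x₀ - f x₀ = y :=
  browder_demiclosedness_opial_general hopial C f hnonexp x hx x₀ hx₀ hweak y hstrong
end
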